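/- arXiv:2505.17157 — 2 statements merged into one kernel-verified Lean document; each statement's English description precedes it below -/
import Mathlib

section
/- Let 0 < k < 1, let H_k(z) = z/((1-k)(1-z)) + (k/(1-k)^2) · Log((1-z)/(1-kz)) on the unit disk 𝔻, and let 0 < r < 1. Then |H_k(r)| = A(k,r) = r/((1-k)(1-r)) + (k/(1-k)^2) · log((1-r)/(1-kr)) and |H_k'(r)| = 1/((1-r)^2 (1-kr)); that is, the extremal function H_k attains equality in both the upper growth bound and the upper distortion bound at z = r. -/
open Complex

/-!
For real `0 < r < 1` the argument `(1 - r)/(1 - k r)` of the logarithm is a positive real, so the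
principal logarithm is the real one and `H_k(r) = A(k, r)`, a positive number. The derivative is
`H_k'(z) = 1/((1 - z)² (1 - k z))` on the whole domain where the principal branch is
holomorphic, and it is positive at `z = r`.
-/

noncomputable section

namespace HalfPlaneExtremal

def H (k z : ℂ) : ℂ :=
  z / ((1 - k) * (1 - z)) + (k / (1 - k) ^ 2) * Complex.log ((1 - z) / (1 - k * z))

def A (k r : ℝ) : ℝ :=
  r / ((1 - k) * (1 - r)) + k / (1 - k) ^ 2 * Real.log ((1 - r) / (1 - k * r))

theorem hasDerivAt_H {k z : ℂ} (hk : k ≠ 1) (hz : z ≠ 1) (hkz : 1 - k * z ≠ 0)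
    (hslit : (1 - z) / (1 - k * z) ∈ slitPlane) :
    HasDerivAt (H k) (1 / ((1 - z) ^ 2 * (1 - k * z))) z := by
  have hk' : 1 - k ≠ 0 := sub_ne_zero.2 hk.symm
  have hz' : 1 - z ≠ 0 := sub_ne_zero.2 hz.symm
  have hfrac := ((hasDerivAt_id z).const_sub 1).div
    (((hasDerivAt_id z).const_mul k).const_sub 1) hkz
  have hlin := (hasDerivAt_id z).div
    (((hasDerivAt_id z).const_sub 1).const_mul (1 - k)) (mul_ne_zero hk' hz')
  refine (hlin.add ((hfrac.clog hslit).const_mul (k / (1 - k) ^ 2))).congr_deriv ?_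
  simp only [id, Pi.div_apply]
  field_simp
  ring

theorem H_ofReal {k r : ℝ} (h : 0 ≤ (1 - r) / (1 - k * r)) : H k r = A k r := by
  have hlog : Complex.log ((1 - r) / (1 - k * r)) = Real.log ((1 - r) / (1 - k * r)) := by
    rw [Complex.ofReal_log h]
    push_cast
    rfl
  simp only [H, A, hlog]
  push_cast
  rfl

/-- With `q = (1 - k r)/(1 - r) > 1` one has `(1 - k)² A(k, r) = q - 1 - k log q`, and
`k log q < log q ≤ q - 1` because `log q > 0`. -/
theorem A_pos {k r : ℝ} (hk : k < 1) (hr0 : 0 < r) (hr1 : r < 1) : 0 < A k r := by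
  have hk' : 1 - k ≠ 0 := by linarith
  have hr' : 1 - r ≠ 0 := by linarith
  set q := (1 - k * r) / (1 - r) with hq
  have hq1 : 1 < q := by
    rw [hq, one_lt_div (by linarith)]
    nlinarith
  have hA : A k r = (q - 1 - k * Real.log q) / (1 - k) ^ 2 := by
    rw [A, ← inv_div (1 - k * r), Real.log_inv, hq]
    field_simp
    ring
  have hlog_le := Real.log_le_sub_one_of_pos (by linarith : 0 < q)
  have hklog : k * Real.log q < Real.log q := by nlinarith [Real.log_pos hq1]
  rw [hA]
  exact div_pos (by linarith) (pow_pos (by linarith) 2)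

end HalfPlaneExtremal

end

theorem Hk_attains_upper_bounds_general
    (k : ℝ) (hk1 : k < 1) (r : ℝ) (hr0 : 0 < r) (hr1 : r < 1) :
    ‖(fun z : ℂ => z / ((1 - (k : ℂ)) * (1 - z)) +
          ((k : ℂ) / (1 - (k : ℂ)) ^ 2) * Complex.log ((1 - z) / (1 - (k : ℂ) * z))) (r : ℂ)‖ =
        r / ((1 - k) * (1 - r)) + k / (1 - k) ^ 2 * Real.log ((1 - r) / (1 - k * r)) ∧
      ‖deriv (fun z : ℂ => z / ((1 - (k : ℂ)) * (1 - z)) +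
            ((k : ℂ) / (1 - (k : ℂ)) ^ 2) * Complex.log ((1 - z) / (1 - (k : ℂ) * z))) (r : ℂ)‖ =
        1 / ((1 - r) ^ 2 * (1 - k * r)) := by
  have hr : 0 < 1 - r := by linarith
  have hkr : 0 < 1 - k * r := by nlinarith
  have hq : 0 < (1 - r) / (1 - k * r) := div_pos hr hkr
  have hslit : (1 - (r : ℂ)) / (1 - k * r) ∈ slitPlane := by
    exact_mod_cast ofReal_mem_slitPlane.2 hq
  have hderiv : HasDerivAt (HalfPlaneExtremal.H k) (1 / ((1 - r) ^ 2 * (1 - k * r)) : ℝ) r := by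
    push_cast
    exact HalfPlaneExtremal.hasDerivAt_H (by exact_mod_cast hk1.ne) (by exact_mod_cast hr1.ne)
      (by exact_mod_cast hkr.ne') hslit
  constructor
  · change ‖HalfPlaneExtremal.H k r‖ = HalfPlaneExtremal.A k r
    rw [HalfPlaneExtremal.H_ofReal hq.le, norm_real,
      Real.norm_of_nonneg (HalfPlaneExtremal.A_pos hk1 hr0 hr1).le]
  · change ‖deriv (HalfPlaneExtremal.H k) r‖ = _
    rw [hderiv.deriv, norm_real, Real.norm_of_nonneg (by positivity)]

/-- The extremal function `H_k` attains equality in the upper growth bound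
`A(k,r)` and in the upper distortion bound at the point `z = r`. -/
theorem Hk_attains_upper_bounds
    (k : ℝ) (hk0 : 0 < k) (hk1 : k < 1) (r : ℝ) (hr0 : 0 < r) (hr1 : r < 1) :
    ‖(fun z : ℂ => z / ((1 - (k : ℂ)) * (1 - z)) +
          ((k : ℂ) / (1 - (k : ℂ)) ^ 2) * Complex.log ((1 - z) / (1 - (k : ℂ) * z))) (r : ℂ)‖ =
        r / ((1 - k) * (1 - r)) + k / (1 - k) ^ 2 * Real.log ((1 - r) / (1 - k * r)) ∧
      ‖deriv (fun z : ℂ => z / ((1 - (k : ℂ)) * (1 - z)) +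
            ((k : ℂ) / (1 - (k : ℂ)) ^ 2) * Complex.log ((1 - z) / (1 - (k : ℂ) * z))) (r : ℂ)‖ =
        1 / ((1 - r) ^ 2 * (1 - k * r)) :=
  Hk_attains_upper_bounds_general k hk1 r hr0 hr1
end

section
/- Let 0 < k < 1, let H_k(z) = z/((1-k)(1-z)) + (k/(1-k)^2) · Log((1-z)/(1-kz)) on the unit disk 𝔻, and let 0 < r < 1. Then |H_k(-r)| = B(k,r) = r/((1-k)(1+r)) + (k/(1-k)^2) · log((1+kr)/(1+r)) and |H_k'(-r)| = 1/((1+r)^2 (1+kr)); that is, the rotated extremal function attains equality in both the lower growth bound and the lower distortion bound. -/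
open Complex Metric Set

/-!
`extremalH k` is the paper's `H_k` and `growthLowerBound k r` its `B(k,r)`.
On the real segment the principal logarithm is the real one, so `H_k(-r)` is the real number
`-B(k,r)`, and `B(k,r) ≥ 0` follows from `log y ≤ y - 1`. Differentiating,
`H_k'(z) = 1 / ((1 - z)^2 (1 - k z))`, which is positive at `z = -r`.
-/

noncomputable def extremalH (k z : ℂ) : ℂ :=
  z / ((1 - k) * (1 - z)) + (k / (1 - k) ^ 2) * Complex.log ((1 - z) / (1 - k * z))

noncomputable def growthLowerBound (k r : ℝ) : ℝ :=
  r / ((1 - k) * (1 + r)) + k / (1 - k) ^ 2 * Real.log ((1 + k * r) / (1 + r))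

section

variable {k z : ℂ}

/-- The slit-plane condition holds throughout the unit disc when `0 ≤ k < 1`. -/
lemma hasDerivAt_extremalH (hk : k ≠ 1) (hz : (1 - z) / (1 - k * z) ∈ slitPlane) :
    HasDerivAt (extremalH k) (1 / ((1 - z) ^ 2 * (1 - k * z))) z := by
  obtain ⟨h1z, h1kz⟩ := div_ne_zero_iff.1 (slitPlane_ne_zero hz)
  have h1k : 1 - k ≠ 0 := sub_ne_zero.2 hk.symm
  have hfrac : HasDerivAt (fun z : ℂ => z / ((1 - k) * (1 - z)))
      ((1 * ((1 - k) * (1 - z)) - z * ((1 - k) * -1)) / ((1 - k) * (1 - z)) ^ 2) z :=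
    (hasDerivAt_id z).div (((hasDerivAt_id z).const_sub 1).const_mul (1 - k)) (mul_ne_zero h1k h1z)
  have hquot : HasDerivAt (fun z : ℂ => (1 - z) / (1 - k * z))
      ((-1 * (1 - k * z) - (1 - z) * -(k * 1)) / (1 - k * z) ^ 2) z :=
    ((hasDerivAt_id z).const_sub 1).div (((hasDerivAt_id z).const_mul k).const_sub 1) h1kz
  refine (hfrac.add ((hquot.clog hz).const_mul (k / (1 - k) ^ 2))).congr_deriv ?_
  have h1zk : 1 - z * k ≠ 0 := by rwa [mul_comm]
  field_simp
  ring

end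

section

variable {k x r : ℝ}

lemma extremalH_ofReal (hx : 0 ≤ (1 - x) / (1 - k * x)) :
    extremalH k x = ((x / ((1 - k) * (1 - x)) +
      k / (1 - k) ^ 2 * Real.log ((1 - x) / (1 - k * x)) : ℝ) : ℂ) := by
  have harg : (1 - x : ℂ) / (1 - k * x) = ((1 - x) / (1 - k * x) : ℝ) := by push_cast; rfl
  rw [extremalH, harg, ← ofReal_log hx]
  push_cast
  rfl

lemma growthLowerBound_eq :
    growthLowerBound k r =
      r / ((1 - k) * (1 + r)) - k / (1 - k) ^ 2 * Real.log ((1 + r) / (1 + k * r)) := by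
  rw [growthLowerBound, ← inv_div (1 + r), Real.log_inv]
  ring

lemma extremalH_neg (hk : 0 ≤ k) (hr : 0 ≤ r) :
    extremalH k (-r) = -(growthLowerBound k r : ℂ) := by
  have harg : (1 - -r) / (1 - k * -r) = (1 + r) / (1 + k * r) := by ring
  rw [← ofReal_neg, extremalH_ofReal (harg ▸ by positivity), harg, growthLowerBound_eq]
  push_cast
  ring

lemma growthLowerBound_nonneg (hk0 : 0 ≤ k) (hk1 : k < 1) (hr : 0 ≤ r) :
    0 ≤ growthLowerBound k r := by
  have h1k : 0 < 1 - k := by linarith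
  have hlog : Real.log ((1 + r) / (1 + k * r)) ≤ r * (1 - k) / (1 + k * r) := by
    calc Real.log ((1 + r) / (1 + k * r)) ≤ (1 + r) / (1 + k * r) - 1 :=
          Real.log_le_sub_one_of_pos (by positivity)
      _ = r * (1 - k) / (1 + k * r) := by field_simp; ring
  have hcmp : k / (1 - k) ^ 2 * (r * (1 - k) / (1 + k * r)) ≤ r / ((1 - k) * (1 + r)) := by
    rw [show k / (1 - k) ^ 2 * (r * (1 - k) / (1 + k * r)) = k * r / ((1 - k) * (1 + k * r)) by
      field_simp, div_le_div_iff₀ (by positivity) (by positivity)]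
    nlinarith [mul_nonneg (mul_nonneg hr hr) h1k.le, mul_nonneg hr h1k.le]
  rw [growthLowerBound_eq]
  linarith [mul_le_mul_of_nonneg_left hlog (by positivity : 0 ≤ k / (1 - k) ^ 2)]

lemma deriv_extremalH_neg (hk0 : 0 ≤ k) (hk1 : k < 1) (hr : 0 ≤ r) :
    deriv (extremalH k) (-r) = ((1 / ((1 + r) ^ 2 * (1 + k * r)) : ℝ) : ℂ) := by
  have hslit : (1 - -(r : ℂ)) / (1 - k * -(r : ℂ)) ∈ slitPlane := by
    have harg : (1 - -(r : ℂ)) / (1 - k * -(r : ℂ)) = ((1 + r) / (1 + k * r) : ℝ) := by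
      push_cast; ring
    rw [harg, ofReal_mem_slitPlane]
    positivity
  rw [(hasDerivAt_extremalH (by exact_mod_cast hk1.ne) hslit).deriv]
  push_cast
  ring

end

theorem Hk_attains_lower_bounds_general
    (k : ℝ) (hk0 : 0 < k) (hk1 : k < 1) (r : ℝ) (hr0 : 0 < r) :
    ‖((fun z : ℂ => z / ((1 - (k : ℂ)) * (1 - z)) +
          ((k : ℂ) / (1 - (k : ℂ)) ^ 2) * Complex.log ((1 - z) / (1 - (k : ℂ) * z))) (-(r : ℂ)))‖ =
        r / ((1 - k) * (1 + r)) + k / (1 - k) ^ 2 * Real.log ((1 + k * r) / (1 + r)) ∧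
      ‖(deriv (fun z : ℂ => z / ((1 - (k : ℂ)) * (1 - z)) +
            ((k : ℂ) / (1 - (k : ℂ)) ^ 2) * Complex.log ((1 - z) / (1 - (k : ℂ) * z))) (-(r : ℂ)))‖ =
        1 / ((1 + r) ^ 2 * (1 + k * r)) := by
  refine ⟨?_, ?_⟩
  · change ‖extremalH k (-r)‖ = growthLowerBound k r
    rw [extremalH_neg hk0.le hr0.le, norm_neg, norm_real,
      Real.norm_of_nonneg (growthLowerBound_nonneg hk0.le hk1 hr0.le)]
  · change ‖deriv (extremalH k) (-r)‖ = _
    rw [deriv_extremalH_neg hk0.le hk1 hr0.le, norm_real, Real.norm_of_nonneg (by positivity)]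

/-- The rotated extremal function attains equality in the lower growth bound
`B(k,r)` and in the lower distortion bound at the point `z = -r`. -/
theorem Hk_attains_lower_bounds
    (k : ℝ) (hk0 : 0 < k) (hk1 : k < 1) (r : ℝ) (hr0 : 0 < r) (hr1 : r < 1) :
    ‖((fun z : ℂ => z / ((1 - (k : ℂ)) * (1 - z)) +
          ((k : ℂ) / (1 - (k : ℂ)) ^ 2) * Complex.log ((1 - z) / (1 - (k : ℂ) * z))) (-(r : ℂ)))‖ =
        r / ((1 - k) * (1 + r)) + k / (1 - k) ^ 2 * Real.log ((1 + k * r) / (1 + r)) ∧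
      ‖(deriv (fun z : ℂ => z / ((1 - (k : ℂ)) * (1 - z)) +
            ((k : ℂ) / (1 - (k : ℂ)) ^ 2) * Complex.log ((1 - z) / (1 - (k : ℂ) * z))) (-(r : ℂ)))‖ =
        1 / ((1 + r) ^ 2 * (1 + k * r)) :=
  Hk_attains_lower_bounds_general k hk0 hk1 r hr0
end
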